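/- arXiv:math/0504252 — 2 statements merged into one kernel-verified Lean document; each statement's English description precedes it below -/
import Mathlib

section
/- There exists a universal constant C₀ > 0 with the following property: for every M ≥ 0 and every function φ : ℂ → ℝ that is C² on the open unit disk 𝔻 and satisfies 0 ≤ Δφ(z) ≤ M for all z ∈ 𝔻, there exists a holomorphic function G on the disk {z : |z| < 1/2} with G(0) = 0 such that |φ(z) − φ(0) − 2·Re(G(z))| ≤ C₀·M for all |z| < 1/2. (Quantitative form of Lemma 6.1, the construction of Berndtsson–Ortega Cerdà: a function with bounded nonnegative Laplacian differs from the real part of a holomorphic function by a bounded error on the half-radius disk.) -/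
/-!
With `f = φ_x - i φ_y = 2 ∂φ/∂z`, the hypothesis says that `f` is `C¹` with
`2 ∂f/∂z̄ = Δφ ∈ [0, M]`. Contract the circle `|w| = 3/4` linearly onto a point `z`: along the
contraction, the Cauchy integral `∮ f(w)/(w - z) dw` moves only through the `∂̄`-part of the
derivative of `f` (the `∂`-part integrates to zero around each intermediate loop), so `f`
differs from its Cauchy integral `h` by at most `(3/4) M`. If `g` is a primitive of the
holomorphic function `h`, the gradient of `φ - Re g` is `conj (f - h)`, and the mean value
inequality bounds `φ z - φ 0 - Re (g z)` by `(3/4) M |z|`.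
-/

open Metric

noncomputable section

/-- The Euclidean Laplacian `∂²φ/∂x² + ∂²φ/∂y²` of `φ : ℂ → ℝ` at a point, as the sum of
the second directional derivatives in the directions `1` and `i`. -/
def lapC (φ : ℂ → ℝ) (z : ℂ) : ℝ :=
  (fderiv ℝ (fun w => fderiv ℝ φ w 1) z) 1 +
    (fderiv ℝ (fun w => fderiv ℝ φ w Complex.I) z) Complex.I

open Complex Real ComplexConjugate Filter Topology
open AffineMap (lineMap)

theorem ContinuousLinearMap.apply_eq_re_smul_add_im_smul {E : Type*} [NormedAddCommGroup E]
    [NormedSpace ℝ E] (T : ℂ →L[ℝ] E) (x : ℂ) : T x = x.re • T 1 + x.im • T I := by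
  calc T x = T (x.re • 1 + x.im • I) := by congr 1; simp
    _ = _ := by rw [map_add, map_smul, map_smul]

-- `T v = a * v + b * conj v` with `b = (T 1 + I * T I) / 2`; the `a`-terms cancel.
theorem ContinuousLinearMap.apply_mul_sub_apply_mul (T : ℂ →L[ℝ] ℂ) (u v : ℂ) :
    T v * u - T u * v = (T 1 + I * T I) / 2 * (conj v * u - conj u * v) := by
  obtain ⟨a, b, rfl⟩ : ∃ a b : ℝ, u = a + b * I := ⟨u.re, u.im, (re_add_im u).symm⟩
  obtain ⟨c, d, rfl⟩ : ∃ c d : ℝ, v = c + d * I := ⟨v.re, v.im, (re_add_im v).symm⟩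
  rw [T.apply_eq_re_smul_add_im_smul (a + b * I), T.apply_eq_re_smul_add_im_smul (c + d * I)]
  simp only [add_re, add_im, ofReal_re, ofReal_im, mul_re, mul_im, I_re, I_im, map_add, map_mul,
    conj_ofReal, conj_I, real_smul]
  ring_nf
  simp only [I_sq]
  ring

theorem ContinuousLinearMap.norm_apply_mul_sub_apply_mul_le (T : ℂ →L[ℝ] ℂ) (u v : ℂ) :
    ‖T v * u - T u * v‖ ≤ ‖T 1 + I * T I‖ * (‖u‖ * ‖v‖) := by
  have h : ‖conj v * u - conj u * v‖ ≤ 2 * (‖u‖ * ‖v‖) := by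
    calc _ ≤ ‖conj v * u‖ + ‖conj u * v‖ := norm_sub_le _ _
      _ = 2 * (‖u‖ * ‖v‖) := by simp only [norm_mul, RCLike.norm_conj]; ring
  rw [T.apply_mul_sub_apply_mul, norm_mul, norm_div, RCLike.norm_ofNat]
  nlinarith [norm_nonneg (T 1 + I * T I)]

theorem ContinuousLinearMap.norm_apply_sub_div_mul_apply_le (T : ℂ →L[ℝ] ℂ) {u : ℂ} (hu : u ≠ 0)
    (v : ℂ) : ‖T v - v / u * T u‖ ≤ ‖T 1 + I * T I‖ * ‖v‖ := by
  have hu' : ‖u‖ ≠ 0 := norm_ne_zero_iff.2 hu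
  calc ‖T v - v / u * T u‖ = ‖T v * u - T u * v‖ / ‖u‖ := by
        rw [← norm_div]; congr 1; field_simp
    _ ≤ ‖T 1 + I * T I‖ * (‖u‖ * ‖v‖) / ‖u‖ := by
        gcongr; exact T.norm_apply_mul_sub_apply_mul_le u v
    _ = ‖T 1 + I * T I‖ * ‖v‖ := by field_simp

section LineMap

variable {E : Type*} [NormedAddCommGroup E] [NormedSpace ℝ E]

theorem dist_lineMap_le (w z c : E) (t : ℝ) :
    dist (lineMap w z t) c ≤ |1 - t| * dist w c + |t| * dist z c := by
  rw [dist_eq_norm, dist_eq_norm, dist_eq_norm, AffineMap.lineMap_apply_module,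
    show (1 - t) • w + t • z - c = (1 - t) • (w - c) + t • (z - c) by module]
  exact (norm_add_le _ _).trans (by rw [norm_smul, norm_smul, Real.norm_eq_abs, Real.norm_eq_abs])

theorem lineMap_mem_closedBall_of_mem_Ioo {w z c : E} {R η t : ℝ} (hw : w ∈ closedBall c R)
    (hz : z ∈ closedBall c R) (hη : 0 ≤ η) (ht : t ∈ Set.Ioo (-η) (1 + η)) :
    lineMap w z t ∈ closedBall c ((1 + 2 * η) * R) := by
  have hR : 0 ≤ R := dist_nonneg.trans hw
  have hsum : |1 - t| + |t| ≤ 1 + 2 * η := by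
    rcases abs_cases (1 - t) with ⟨h1, -⟩ | ⟨h1, -⟩ <;>
      rcases abs_cases t with ⟨h2, -⟩ | ⟨h2, -⟩ <;> linarith [ht.1, ht.2, hη]
  calc dist (lineMap w z t) c ≤ |1 - t| * dist w c + |t| * dist z c := dist_lineMap_le w z c t
    _ ≤ |1 - t| * R + |t| * R := by gcongr <;> assumption
    _ ≤ (1 + 2 * η) * R := by nlinarith

end LineMap

section CircleContraction

variable {f : ℂ → ℂ} {U : Set ℂ} {c z : ℂ} {R s : ℝ}

theorem hasDerivAt_lineMap_circleMap (c z : ℂ) (R s θ : ℝ) :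
    HasDerivAt (fun θ => lineMap (circleMap c R θ) z s) ((1 - s) • (circleMap 0 R θ * I)) θ := by
  simp only [AffineMap.lineMap_apply_module]
  exact ((hasDerivAt_circleMap c R θ).const_smul (1 - s)).add_const _

theorem continuous_comp_lineMap_circleMap {E : Type*} [TopologicalSpace E] {g : ℂ → E}
    (hg : ContinuousOn g U) (hmem : ∀ θ, lineMap (circleMap c R θ) z s ∈ U) :
    Continuous fun θ => g (lineMap (circleMap c R θ) z s) :=
  hg.comp_continuous (continuous_iff_continuousAt.2 fun θ =>
    (hasDerivAt_lineMap_circleMap c z R s θ).continuousAt) hmem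

theorem integral_fderiv_lineMap_circleMap_eq_zero (hU : IsOpen U) (hf : ContDiffOn ℝ 1 f U)
    (hs : s ≠ 1) (hmem : ∀ θ, lineMap (circleMap c R θ) z s ∈ U) :
    ∫ θ in 0..2 * π, fderiv ℝ f (lineMap (circleMap c R θ) z s) (circleMap 0 R θ * I) = 0 := by
  have hderiv (θ : ℝ) : HasDerivAt (fun θ => f (lineMap (circleMap c R θ) z s))
      ((1 - s) • fderiv ℝ f (lineMap (circleMap c R θ) z s) (circleMap 0 R θ * I)) θ := by
    rw [← map_smul]
    exact ((hf.differentiableOn one_ne_zero).differentiableAt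
      (hU.mem_nhds (hmem θ))).hasFDerivAt.comp_hasDerivAt θ (hasDerivAt_lineMap_circleMap c z R s θ)
  have hcont : Continuous fun θ =>
      fderiv ℝ f (lineMap (circleMap c R θ) z s) (circleMap 0 R θ * I) :=
    (continuous_comp_lineMap_circleMap (hf.continuousOn_fderiv_of_isOpen hU le_rfl) hmem).clm_apply
      ((continuous_circleMap 0 R).mul continuous_const)
  have hFTC := intervalIntegral.integral_eq_sub_of_hasDerivAt (fun θ _ => hderiv θ)
    ((hcont.const_smul (1 - s)).intervalIntegrable 0 (2 * π))
  rw [intervalIntegral.integral_smul, (periodic_circleMap c R).eq, sub_self,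
    smul_eq_zero] at hFTC
  exact hFTC.resolve_left (sub_ne_zero.2 hs.symm)

theorem hasDerivAt_circleIntegral_lineMap {K : Set ℂ} {S : Set ℝ} (hU : IsOpen U)
    (hf : ContDiffOn ℝ 1 f U) (hK : IsCompact K) (hKU : K ⊆ U) (hS : S ∈ 𝓝 s)
    (hmem : ∀ t ∈ S, ∀ θ, lineMap (circleMap c R θ) z t ∈ K) (hz : ∀ θ, circleMap c R θ ≠ z) :
    HasDerivAt (fun t => ∮ w in C(c, R), (w - z)⁻¹ • f (lineMap w z t))
      (∮ w in C(c, R), (w - z)⁻¹ • fderiv ℝ f (lineMap w z s) (z - w)) s := by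
  have hf' := hf.continuousOn_fderiv_of_isOpen hU le_rfl
  obtain ⟨C, hC⟩ := hK.exists_bound_of_continuousOn (hf'.mono hKU)
  have hmemU (t) (ht : t ∈ S) θ := hKU (hmem t ht θ)
  have hkernel : Continuous fun θ => circleMap 0 R θ * I * (circleMap c R θ - z)⁻¹ :=
    ((continuous_circleMap 0 R).mul continuous_const).mul
      (((continuous_circleMap c R).sub continuous_const).inv₀ fun θ => sub_ne_zero.2 (hz θ))
  have hF (t) (ht : t ∈ S) : Continuous fun θ =>
      circleMap 0 R θ * I * (circleMap c R θ - z)⁻¹ * f (lineMap (circleMap c R θ) z t) :=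
    hkernel.mul (continuous_comp_lineMap_circleMap hf.continuousOn (hmemU t ht))
  have hF' : Continuous fun θ => circleMap 0 R θ * I * (circleMap c R θ - z)⁻¹ *
      fderiv ℝ f (lineMap (circleMap c R θ) z s) (z - circleMap c R θ) :=
    hkernel.mul ((continuous_comp_lineMap_circleMap hf' (hmemU s (mem_of_mem_nhds hS))).clm_apply
      (continuous_const.sub (continuous_circleMap c R)))
  simp only [circleIntegral, deriv_circleMap, smul_eq_mul, ← mul_assoc]
  refine (intervalIntegral.hasDerivAt_integral_of_dominated_loc_of_deriv_le
    (F' := fun t θ => circleMap 0 R θ * I * (circleMap c R θ - z)⁻¹ *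
      fderiv ℝ f (lineMap (circleMap c R θ) z t) (z - circleMap c R θ))
    (bound := fun θ => ‖circleMap 0 R θ * I * (circleMap c R θ - z)⁻¹‖ *
      (C * ‖z - circleMap c R θ‖)) hS
    (eventually_of_mem hS fun t ht => (hF t ht).aestronglyMeasurable)
    ((hF s (mem_of_mem_nhds hS)).intervalIntegrable _ _) hF'.aestronglyMeasurable
    (Eventually.of_forall fun θ _ t ht => ?_)
    ((hkernel.norm.mul (continuous_const.mul
      (continuous_const.sub (continuous_circleMap c R)).norm)).intervalIntegrable _ _)
    (Eventually.of_forall fun θ _ t ht => ?_)).2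
  · rw [norm_mul]
    gcongr
    exact ((fderiv ℝ f _).le_opNorm _).trans
      (mul_le_mul_of_nonneg_right (hC _ (hmem t ht θ)) (norm_nonneg _))
  · exact (((hf.differentiableOn one_ne_zero).differentiableAt (hU.mem_nhds (hmemU t ht θ))
      ).hasFDerivAt.comp_hasDerivAt t AffineMap.hasDerivAt_lineMap).const_mul _

theorem norm_circleIntegral_fderiv_lineMap_le {M : ℝ} (hU : IsOpen U) (hf : ContDiffOn ℝ 1 f U)
    (hR : 0 ≤ R) (hs : s ≠ 1) (hmem : ∀ θ, lineMap (circleMap c R θ) z s ∈ U)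
    (hz : ∀ θ, circleMap c R θ ≠ z)
    (hM : ∀ θ, ‖fderiv ℝ f (lineMap (circleMap c R θ) z s) 1 +
      I * fderiv ℝ f (lineMap (circleMap c R θ) z s) I‖ ≤ M) :
    ‖∮ w in C(c, R), (w - z)⁻¹ • fderiv ℝ f (lineMap w z s) (z - w)‖ ≤ 2 * π * R * M := by
  set T := fun θ => fderiv ℝ f (lineMap (circleMap c R θ) z s)
  have hT := continuous_comp_lineMap_circleMap (hf.continuousOn_fderiv_of_isOpen hU le_rfl) hmem
  have hv : Continuous fun θ => circleMap 0 R θ * I :=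
    (continuous_circleMap 0 R).mul continuous_const
  have hu : Continuous fun θ => circleMap c R θ - z :=
    (continuous_circleMap c R).sub continuous_const
  have hu0 (θ : ℝ) : circleMap c R θ - z ≠ 0 := sub_ne_zero.2 (hz θ)
  -- Subtracting the vanishing integral of `T θ (circleMap 0 R θ * I)` leaves the `∂̄`-part only.
  have hsplit : (∮ w in C(c, R), (w - z)⁻¹ • fderiv ℝ f (lineMap w z s) (z - w)) =
      ∫ θ in 0..2 * π, (T θ (circleMap 0 R θ * I) -
        circleMap 0 R θ * I / (circleMap c R θ - z) * T θ (circleMap c R θ - z)) := by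
    have hX : Continuous fun θ =>
        circleMap 0 R θ * I / (circleMap c R θ - z) * T θ (circleMap c R θ - z) :=
      (hv.div hu hu0).mul (hT.clm_apply hu)
    rw [intervalIntegral.integral_sub ((hT.clm_apply hv).intervalIntegrable _ _)
      (hX.intervalIntegrable _ _),
      integral_fderiv_lineMap_circleMap_eq_zero hU hf hs hmem, zero_sub,
      ← intervalIntegral.integral_neg]
    refine intervalIntegral.integral_congr fun θ _ => ?_
    simp only [deriv_circleMap, smul_eq_mul, T]
    rw [← neg_sub (circleMap c R θ) z, map_neg]
    ring
  have hbound (θ : ℝ) : ‖T θ (circleMap 0 R θ * I) -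
      circleMap 0 R θ * I / (circleMap c R θ - z) * T θ (circleMap c R θ - z)‖ ≤ M * R := by
    refine ((T θ).norm_apply_sub_div_mul_apply_le (hu0 θ) _).trans ?_
    rw [show ‖circleMap 0 R θ * I‖ = R by simp [abs_of_nonneg hR]]
    exact mul_le_mul_of_nonneg_right (hM θ) hR
  rw [hsplit]
  calc _ ≤ M * R * |2 * π - 0| :=
        intervalIntegral.norm_integral_le_of_norm_le_const fun θ _ => hbound θ
    _ = 2 * π * R * M := by rw [sub_zero, abs_of_pos two_pi_pos]; ring

end CircleContraction

theorem norm_two_pi_I_smul_sub_circleIntegral_le {f : ℂ → ℂ} {U : Set ℂ} {c z : ℂ} {R M : ℝ}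
    (hU : IsOpen U) (hf : ContDiffOn ℝ 1 f U) (hRU : closedBall c R ⊆ U) (hz : z ∈ ball c R)
    (hM : ∀ w ∈ closedBall c R, ‖fderiv ℝ f w 1 + I * fderiv ℝ f w I‖ ≤ M) :
    ‖(2 * π * I) • f z - ∮ w in C(c, R), (w - z)⁻¹ • f w‖ ≤ 2 * π * R * M := by
  have hR : 0 < R := pos_of_mem_ball hz
  have hz' : ∀ θ, circleMap c R θ ≠ z := circleMap_ne_mem_ball hz
  have hin : ∀ t ∈ Set.Icc (0 : ℝ) 1, ∀ θ, lineMap (circleMap c R θ) z t ∈ closedBall c R :=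
    fun t ht θ => (convex_closedBall c R).lineMap_mem (circleMap_mem_closedBall c hR.le θ)
      (ball_subset_closedBall hz) ht
  -- The derivative at the endpoints `t = 0, 1` needs the loops for `t` slightly outside `[0, 1]`.
  obtain ⟨δ, hδ, hδU⟩ := (isCompact_closedBall c R).exists_cthickening_subset_open hU hRU
  rw [cthickening_closedBall hδ.le hR.le] at hδU
  obtain ⟨η, hη, hηR⟩ : ∃ η : ℝ, 0 < η ∧ (1 + 2 * η) * R = δ + R :=
    ⟨δ / (2 * R), by positivity, by field_simp; ring⟩
  have hnear (t) (ht : t ∈ Set.Ioo (-η) (1 + η)) (θ : ℝ) :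
      lineMap (circleMap c R θ) z t ∈ closedBall c (δ + R) :=
    hηR ▸ lineMap_mem_closedBall_of_mem_Ioo (circleMap_mem_closedBall c hR.le θ)
      (ball_subset_closedBall hz) hη.le ht
  have hΦ := norm_image_sub_le_of_norm_deriv_le_segment_01'
    (f := fun t => ∮ w in C(c, R), (w - z)⁻¹ • f (lineMap w z t))
    (fun t ht => (hasDerivAt_circleIntegral_lineMap hU hf (isCompact_closedBall c (δ + R)) hδU
      (Ioo_mem_nhds (by linarith [ht.1]) (by linarith [ht.2])) hnear hz').hasDerivWithinAt)
    (fun t ht => norm_circleIntegral_fderiv_lineMap_le hU hf hR.le ht.2.ne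
      (fun θ => hRU (hin t (Set.Ico_subset_Icc_self ht) θ)) hz'
      (fun θ => hM _ (hin t (Set.Ico_subset_Icc_self ht) θ)))
  simpa only [AffineMap.lineMap_apply_one, AffineMap.lineMap_apply_zero,
    circleIntegral.integral_smul_const, circleIntegral.integral_sub_inv_of_mem_ball hz] using hΦ

theorem norm_sub_cauchyIntegral_le {f : ℂ → ℂ} {U : Set ℂ} {c z : ℂ} {R M : ℝ} (hU : IsOpen U)
    (hf : ContDiffOn ℝ 1 f U) (hRU : closedBall c R ⊆ U) (hz : z ∈ ball c R)
    (hM : ∀ w ∈ closedBall c R, ‖fderiv ℝ f w 1 + I * fderiv ℝ f w I‖ ≤ M) :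
    ‖f z - (2 * π * I)⁻¹ • ∮ w in C(c, R), (w - z)⁻¹ • f w‖ ≤ R * M := by
  have h2πI : (2 * π * I : ℂ) ≠ 0 := by simp [pi_ne_zero]
  have h2π : ‖(2 * π * I : ℂ)‖ = 2 * π := by simp [pi_pos.le]
  rw [← inv_smul_smul₀ h2πI (f z), ← smul_sub, norm_smul, norm_inv, h2π,
    inv_mul_le_iff₀ two_pi_pos, ← mul_assoc]
  exact norm_two_pi_I_smul_sub_circleIntegral_le hU hf hRU hz hM

theorem differentiableOn_cauchyIntegral {E : Type*} [NormedAddCommGroup E] [NormedSpace ℂ E]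
    [CompleteSpace E] {f : ℂ → E} {c : ℂ} {R : ℝ} (hf : ContinuousOn f (sphere c R)) :
    DifferentiableOn ℂ (fun z => (2 * π * I)⁻¹ • ∮ w in C(c, R), (w - z)⁻¹ • f w) (ball c R) := by
  rcases le_or_gt R 0 with hR | hR
  · rw [ball_eq_empty.2 hR]
    exact differentiableOn_empty
  lift R to NNReal using hR.le
  simpa using (hasFPowerSeriesOn_cauchy_integral (hf.circleIntegrable R.2) hR).differentiableOn

/-- `conjGrad (fderiv ℝ φ z) = φ_x - i φ_y = 2 ∂φ/∂z`. -/
def conjGrad : (ℂ →L[ℝ] ℝ) →L[ℝ] ℂ :=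
  ofRealCLM ∘L ContinuousLinearMap.apply ℝ ℝ 1 - I • ofRealCLM ∘L ContinuousLinearMap.apply ℝ ℝ I

theorem conjGrad_apply (T : ℂ →L[ℝ] ℝ) : conjGrad T = T 1 - I * T I := by
  simp [conjGrad]

theorem re_conjGrad_mul (T : ℂ →L[ℝ] ℝ) (v : ℂ) : (conjGrad T * v).re = T v := by
  rw [conjGrad_apply, T.apply_eq_re_smul_add_im_smul v]
  simp only [mul_re, sub_re, sub_im, ofReal_re, ofReal_im, I_re, I_im, mul_im, smul_eq_mul]
  ring

theorem fderiv_conjGrad_one_add_I_mul_eq_lapC {φ : ℂ → ℝ} {w : ℂ} (hφ : ContDiffAt ℝ 2 φ w) :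
    fderiv ℝ (fun x => conjGrad (fderiv ℝ φ x)) w 1 +
      I * fderiv ℝ (fun x => conjGrad (fderiv ℝ φ x)) w I = lapC φ w := by
  have hB : HasFDerivAt (fderiv ℝ φ) (fderiv ℝ (fderiv ℝ φ) w) w :=
    ((hφ.fderiv_right (m := 1) le_rfl).differentiableAt one_ne_zero).hasFDerivAt
  have hpartial (u : ℂ) : fderiv ℝ (fun x => fderiv ℝ φ x u) w =
      ContinuousLinearMap.apply ℝ ℝ u ∘L fderiv ℝ (fderiv ℝ φ) w :=
    ((ContinuousLinearMap.apply ℝ ℝ u).hasFDerivAt.comp w hB).fderiv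
  have hf : HasFDerivAt (fun x => conjGrad (fderiv ℝ φ x))
      (conjGrad ∘L fderiv ℝ (fderiv ℝ φ) w) w := conjGrad.hasFDerivAt.comp w hB
  have hsymm := hφ.isSymmSndFDerivAt (by simp) 1 I
  rw [hf.fderiv, lapC, hpartial, hpartial]
  simp only [ContinuousLinearMap.comp_apply, conjGrad_apply, ContinuousLinearMap.apply_apply, hsymm]
  push_cast
  linear_combination -(fderiv ℝ (fderiv ℝ φ) w I I : ℂ) * I_sq

theorem ContDiffOn.conjGrad_fderiv {φ : ℂ → ℝ} {U : Set ℂ} (hU : IsOpen U)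
    (hφ : ContDiffOn ℝ 2 φ U) : ContDiffOn ℝ 1 (fun w => conjGrad (fderiv ℝ φ w)) U :=
  conjGrad.contDiff.comp_contDiffOn (hφ.fderiv_of_isOpen hU le_rfl)

theorem norm_conjGrad_fderiv_sub_cauchyIntegral_le {φ : ℂ → ℝ} {U : Set ℂ} {c z : ℂ} {R M : ℝ}
    (hU : IsOpen U) (hφ : ContDiffOn ℝ 2 φ U) (hRU : closedBall c R ⊆ U) (hz : z ∈ ball c R)
    (hM : ∀ w ∈ closedBall c R, |lapC φ w| ≤ M) :
    ‖conjGrad (fderiv ℝ φ z) -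
      (2 * π * I)⁻¹ • ∮ w in C(c, R), (w - z)⁻¹ • conjGrad (fderiv ℝ φ w)‖ ≤ R * M :=
  norm_sub_cauchyIntegral_le hU (hφ.conjGrad_fderiv hU) hRU hz fun w hw => by
    rw [fderiv_conjGrad_one_add_I_mul_eq_lapC (hφ.contDiffAt (hU.mem_nhds (hRU hw))), norm_real,
      Real.norm_eq_abs]
    exact hM w hw

theorem Convex.norm_sub_re_primitive_le {φ : ℂ → ℝ} {g h : ℂ → ℂ} {s : Set ℂ} {C : ℝ} {x y : ℂ}
    (hs : Convex ℝ s) (hφ : ∀ w ∈ s, DifferentiableAt ℝ φ w) (hg : ∀ w ∈ s, HasDerivAt g (h w) w)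
    (hC : ∀ w ∈ s, ‖conjGrad (fderiv ℝ φ w) - h w‖ ≤ C) (hx : x ∈ s) (hy : y ∈ s) :
    ‖(φ y - (g y).re) - (φ x - (g x).re)‖ ≤ C * ‖y - x‖ := by
  refine hs.norm_image_sub_le_of_norm_hasFDerivWithin_le (fun w hw =>
    ((hφ w hw).hasFDerivAt.sub (reCLM.hasFDerivAt.comp w (hg w hw).complexToReal_fderiv)
      ).hasFDerivWithinAt) (fun w hw => ?_) hx hy
  refine ContinuousLinearMap.opNorm_le_bound _ ((norm_nonneg _).trans (hC w hw)) fun v => ?_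
  have hre : (fderiv ℝ φ w - reCLM ∘L (h w • (1 : ℂ →L[ℝ] ℂ))) v =
      ((conjGrad (fderiv ℝ φ w) - h w) * v).re := by
    rw [sub_mul, sub_re, re_conjGrad_mul]
    rfl
  rw [hre]
  exact (abs_re_le_norm _).trans ((norm_mul_le _ _).trans
    (mul_le_mul_of_nonneg_right (hC w hw) (norm_nonneg v)))

/-- Quantitative form of Lemma 6.1 (Berndtsson–Ortega Cerdà): there is an absolute constant
`C₀ > 0` such that any `φ` that is `C²` on the unit disk with `0 ≤ Δφ ≤ M` differs from
`φ(0)` plus twice the real part of a holomorphic function `G` (with `G(0) = 0`) by at most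
`C₀·M` on the disk of radius `1/2`. -/
theorem berndtsson_ortega_cerda_construction :
    ∃ C₀ : ℝ, 0 < C₀ ∧ ∀ M : ℝ, 0 ≤ M → ∀ φ : ℂ → ℝ,
      ContDiffOn ℝ 2 φ (ball (0 : ℂ) 1) →
      (∀ z ∈ ball (0 : ℂ) 1, 0 ≤ lapC φ z ∧ lapC φ z ≤ M) →
      ∃ G : ℂ → ℂ, DifferentiableOn ℂ G (ball (0 : ℂ) (1 / 2)) ∧ G 0 = 0 ∧
        ∀ z ∈ ball (0 : ℂ) (1 / 2), |φ z - φ 0 - 2 * (G z).re| ≤ C₀ * M := by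
  refine ⟨1, one_pos, fun M hM φ hφ hlap => ?_⟩
  have hsub : closedBall (0 : ℂ) (3 / 4) ⊆ ball 0 1 := closedBall_subset_ball (by norm_num)
  have hhalf : ball (0 : ℂ) (1 / 2) ⊆ ball 0 (3 / 4) := ball_subset_ball (by norm_num)
  obtain ⟨g, hg0, hg⟩ := (differentiableOn_cauchyIntegral ((hφ.conjGrad_fderiv isOpen_ball
    ).continuousOn.mono (sphere_subset_closedBall.trans hsub))).isExactOn_ball.with_val_at 0 0
  refine ⟨fun z => g z / 2, fun z hz => ((hg z (hhalf hz)).differentiableAt.div_const 2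
    ).differentiableWithinAt, by simp [hg0], fun z hz => ?_⟩
  have hMVT := (convex_ball (0 : ℂ) (1 / 2)).norm_sub_re_primitive_le
    (fun w hw => (hφ.differentiableOn (by norm_num)).differentiableAt
      (isOpen_ball.mem_nhds (hsub (ball_subset_closedBall (hhalf hw)))))
    (fun w hw => hg w (hhalf hw))
    (fun w hw => norm_conjGrad_fderiv_sub_cauchyIntegral_le isOpen_ball hφ hsub (hhalf hw)
      fun v hv => abs_le.2 ⟨(neg_nonpos.2 hM).trans (hlap v (hsub hv)).1, (hlap v (hsub hv)).2⟩)
    (mem_ball_self one_half_pos) hz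
  rw [hg0, zero_re, sub_zero, sub_zero, Real.norm_eq_abs] at hMVT
  calc |φ z - φ 0 - 2 * (g z / 2).re| = |φ z - (g z).re - φ 0| := by rw [div_ofNat_re]; ring_nf
    _ ≤ 3 / 4 * M * ‖z‖ := hMVT
    _ ≤ 1 * M := by nlinarith [norm_nonneg z, mem_ball_zero_iff.1 hz]
end
end

section
/- Let H₁, H₂, H₃ be complex Hilbert spaces, let T : H₁ ⇀ H₂ and S : H₂ ⇀ H₃ be densely defined closed linear operators, and suppose ran T ⊆ ker S. Let α ∈ ker S and C ≥ 0 be such that |⟨α, u⟩|² ≤ C·‖T*u‖² for every u ∈ dom T* ∩ ker S, where T* is the Hilbert-space adjoint of T. Then there exists h ∈ dom T with T h = α and ‖h‖² ≤ C. (Functional-analytic core of Theorem 5.6: the Riesz-representation/duality argument producing a solution of Th = α with norm control from the a priori estimate.) -/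
/-!
Because `ran T ⊆ ker S` and `ker S` is closed, replacing `u ∈ dom T*` by its orthogonal projection
onto `ker S` changes neither `⟪α, u⟫` nor `T* u`: the difference lies in `(ran T)ᗮ ⊆ ker T*`. So the
a priori estimate holds on all of `dom T*`, and `T* u ↦ ⟪α, u⟫` is a well-defined functional of norm
at most `√C` on `ran T*`. Hahn–Banach and Riesz represent it by some `h` with `‖h‖ ≤ √C`, that is
`⟪T* u, h⟫ = ⟪u, α⟫` for all `u ∈ dom T*`; since `T` is closed, its graph is its double
orthogonal complement, which says exactly that `h ∈ dom T` and `T h = α`.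
-/

open scoped InnerProductSpace

section
variable {𝕜 E : Type*} [RCLike 𝕜] [NormedAddCommGroup E] [InnerProductSpace 𝕜 E]

theorem exists_inner_eq_of_norm_le {V : Type*} [AddCommGroup V] [Module 𝕜 V] [CompleteSpace E]
    (f : V →ₗ[𝕜] E) (g : V →ₗ[𝕜] 𝕜) {M : ℝ} (hM : 0 ≤ M) (hg : ∀ v, ‖g v‖ ≤ M * ‖f v‖) :
    ∃ h : E, ‖h‖ ≤ M ∧ ∀ v, ⟪h, f v⟫_𝕜 = g v := by
  have hker : LinearMap.ker f ≤ LinearMap.ker g := fun v hv ↦ by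
    simpa [LinearMap.mem_ker.mp hv] using hg v
  let ℓ₀ : LinearMap.range f →ₗ[𝕜] 𝕜 :=
    (LinearMap.ker f).liftQ g hker ∘ₗ f.quotKerEquivRange.symm.toLinearMap
  have hℓ₀ (v : V) : ℓ₀ ⟨f v, LinearMap.mem_range_self f v⟩ = g v := by
    simp [ℓ₀, LinearMap.quotKerEquivRange_symm_apply_image]
  let ℓ := ℓ₀.mkContinuous M <| by
    rintro ⟨_, v, rfl⟩
    simpa [hℓ₀] using hg v
  obtain ⟨G, hGℓ, hGnorm⟩ := exists_extension_norm_eq (LinearMap.range f) ℓ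
  refine ⟨(InnerProductSpace.toDual 𝕜 E).symm G, ?_, fun v ↦ ?_⟩
  · rw [LinearIsometryEquiv.norm_map, hGnorm]
    exact LinearMap.mkContinuous_norm_le _ hM _
  · rw [InnerProductSpace.toDual_symm_apply]
    exact (hGℓ ⟨f v, LinearMap.mem_range_self f v⟩).trans (hℓ₀ v)

end

namespace LinearPMap

section Kernel

variable {R E G : Type*} [CommRing R] [AddCommGroup E] [Module R E] [AddCommGroup G] [Module R G]

def ker (S : E →ₗ.[R] G) : Submodule R E := (LinearMap.ker S.toFun).map S.domain.subtype

variable {S : E →ₗ.[R] G}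

theorem mem_ker_iff {u : E} : u ∈ S.ker ↔ ∃ hu : u ∈ S.domain, S ⟨u, hu⟩ = 0 := by
  simp [ker]

theorem IsClosed.isClosed_ker [TopologicalSpace E] [TopologicalSpace G] (hS : S.IsClosed) :
    _root_.IsClosed (S.ker : Set E) := by
  have : (S.ker : Set E) = (fun u ↦ (u, (0 : G))) ⁻¹' S.graph := by
    ext u
    simp [mem_ker_iff, mem_graph_iff]
  rw [this]
  exact hS.preimage (Continuous.prodMk_left 0)

end Kernel

variable {𝕜 E F : Type*} [RCLike 𝕜]
  [NormedAddCommGroup E] [InnerProductSpace 𝕜 E] [NormedAddCommGroup F] [InnerProductSpace 𝕜 F]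
  [CompleteSpace E] {T : E →ₗ.[𝕜] F}

theorem exists_adjoint_eq_neg_of_inner_graph (hT : Dense (T.domain : Set E)) {x : E} {y : F}
    (h : ∀ v : T.domain, ⟪x, v⟫_𝕜 + ⟪y, T v⟫_𝕜 = 0) :
    ∃ hy : y ∈ T†.domain, T† ⟨y, hy⟩ = -x := by
  have hadj (v : T.domain) : ⟪-x, v⟫_𝕜 = ⟪y, T v⟫_𝕜 := by
    rw [inner_neg_left]
    linear_combination -h v
  have hy : y ∈ T†.domain := mem_adjoint_domain_of_exists y ⟨-x, hadj⟩
  exact ⟨hy, adjoint_apply_eq hT ⟨y, hy⟩ hadj⟩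

theorem exists_adjoint_eq_zero_of_mem_orthogonal (hT : Dense (T.domain : Set E))
    {K : Submodule 𝕜 F} (hTK : ∀ v : T.domain, T v ∈ K) {y : F} (hyK : y ∈ Kᗮ) :
    ∃ hy : y ∈ T†.domain, T† ⟨y, hy⟩ = 0 := by
  have h (v : T.domain) : ⟪(0 : E), v⟫_𝕜 + ⟪y, T v⟫_𝕜 = 0 := by
    rw [inner_zero_left, zero_add, Submodule.inner_left_of_mem_orthogonal (hTK v) hyK]
  simpa only [neg_zero] using exists_adjoint_eq_neg_of_inner_graph hT h

theorem exists_adjoint_starProjection_eq (hT : Dense (T.domain : Set E)) (K : Submodule 𝕜 F)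
    [K.HasOrthogonalProjection] (hTK : ∀ v : T.domain, T v ∈ K) (u : T†.domain) :
    ∃ hu : K.starProjection u ∈ T†.domain, T† ⟨K.starProjection u, hu⟩ = T† u := by
  obtain ⟨u, hu⟩ := u
  obtain ⟨hw, hw0⟩ := exists_adjoint_eq_zero_of_mem_orthogonal hT hTK
    (K.sub_starProjection_mem_orthogonal u)
  rw [← sub_sub_cancel u (K.starProjection u)]
  exact ⟨_, (LinearPMap.map_sub _ ⟨u, hu⟩ ⟨_, hw⟩).trans (by rw [hw0, sub_zero])⟩

theorem mem_graph_of_inner_adjoint [CompleteSpace F] (hT : Dense (T.domain : Set E))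
    (hTc : T.IsClosed) {x : E} {y : F} (h : ∀ u : T†.domain, ⟪T† u, x⟫_𝕜 = ⟪(u : F), y⟫_𝕜) :
    (x, y) ∈ T.graph := by
  let e := WithLp.prodContinuousLinearEquiv 2 𝕜 E F
  let Γ : Submodule 𝕜 (WithLp 2 (E × F)) := T.graph.comap e.toLinearMap
  have : CompleteSpace Γ := (hTc.preimage e.continuous).completeSpace_coe
  suffices WithLp.toLp 2 (x, y) ∈ Γᗮᗮ by rwa [Submodule.orthogonal_orthogonal] at this
  refine Submodule.mem_orthogonal _ _ |>.mpr fun w hw ↦ ?_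
  obtain ⟨hw₂, hTw₂⟩ := exists_adjoint_eq_neg_of_inner_graph hT (x := w.fst) (y := w.snd)
    fun v ↦ by simpa [WithLp.prod_inner_apply] using
      (Submodule.mem_orthogonal' _ _).mp hw (WithLp.toLp 2 (v, T v)) (T.mem_graph v)
  have := h ⟨_, hw₂⟩
  rw [hTw₂, inner_neg_left] at this
  rw [WithLp.prod_inner_apply, WithLp.ofLp_fst, WithLp.ofLp_snd]
  linear_combination -this

theorem norm_inner_le_of_forall_mem (hT : Dense (T.domain : Set E)) (K : Submodule 𝕜 F)
    [K.HasOrthogonalProjection] (hTK : ∀ v : T.domain, T v ∈ K) {y : F} (hyK : y ∈ K) {M : ℝ}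
    (hest : ∀ u : T†.domain, (u : F) ∈ K → ‖⟪y, (u : F)⟫_𝕜‖ ≤ M * ‖T† u‖) (u : T†.domain) :
    ‖⟪y, (u : F)⟫_𝕜‖ ≤ M * ‖T† u‖ := by
  obtain ⟨hPu, hTPu⟩ := exists_adjoint_starProjection_eq hT K hTK u
  have hyPu : ⟪y, K.starProjection u⟫_𝕜 = ⟪y, (u : F)⟫_𝕜 := by
    rw [← K.inner_starProjection_left_eq_right, K.starProjection_eq_self_iff.mpr hyK]
  simpa only [hyPu, hTPu] using hest ⟨_, hPu⟩ (K.starProjection_apply_mem u)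

theorem exists_apply_eq_of_norm_inner_le [CompleteSpace F] (hT : Dense (T.domain : Set E))
    (hTc : T.IsClosed) {y : F} {M : ℝ} (hM : 0 ≤ M)
    (hest : ∀ u : T†.domain, ‖⟪y, (u : F)⟫_𝕜‖ ≤ M * ‖T† u‖) :
    ∃ x : E, ∃ hx : x ∈ T.domain, T ⟨x, hx⟩ = y ∧ ‖x‖ ≤ M := by
  obtain ⟨x, hxM, hx⟩ :=
    exists_inner_eq_of_norm_le T†.toFun ((innerₛₗ 𝕜 y) ∘ₗ T†.domain.subtype) hM hest
  have hxy : (x, y) ∈ T.graph := mem_graph_of_inner_adjoint hT hTc fun u ↦ by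
    rw [← inner_conj_symm, ← inner_conj_symm (u : F)]
    exact congrArg _ (hx u)
  obtain ⟨⟨x, hxT⟩, rfl, hTx⟩ := T.mem_graph_iff.mp hxy
  exact ⟨x, hxT, hTx, hxM⟩

end LinearPMap

open LinearPMap

theorem exists_solution_of_apriori_estimate_general
    {H₁ H₂ H₃ : Type*}
    [NormedAddCommGroup H₁] [InnerProductSpace ℂ H₁] [CompleteSpace H₁]
    [NormedAddCommGroup H₂] [InnerProductSpace ℂ H₂] [CompleteSpace H₂]
    [NormedAddCommGroup H₃] [InnerProductSpace ℂ H₃] [CompleteSpace H₃]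
    (T : H₁ →ₗ.[ℂ] H₂) (S : H₂ →ₗ.[ℂ] H₃)
    (hTdense : Dense (T.domain : Set H₁))
    (hTclosed : T.IsClosed) (hSclosed : S.IsClosed)
    (hranker : ∀ v : T.domain, ∃ hv : (T v : H₂) ∈ S.domain, S ⟨T v, hv⟩ = 0)
    (α : H₂) (hα : α ∈ S.domain) (hα0 : S ⟨α, hα⟩ = 0)
    (C : ℝ) (hC : 0 ≤ C)
    (hest : ∀ u : H₂, ∀ hu : u ∈ T.adjoint.domain, ∀ hu' : u ∈ S.domain,
      S ⟨u, hu'⟩ = 0 → ‖(⟪α, u⟫_ℂ : ℂ)‖ ^ 2 ≤ C * ‖T.adjoint ⟨u, hu⟩‖ ^ 2) :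
    ∃ h : H₁, ∃ hh : h ∈ T.domain, T ⟨h, hh⟩ = α ∧ ‖h‖ ^ 2 ≤ C := by
  have : CompleteSpace S.ker := hSclosed.isClosed_ker.completeSpace_coe
  have hest_ker (u : T†.domain) (hu : (u : H₂) ∈ S.ker) : ‖⟪α, (u : H₂)⟫_ℂ‖ ≤ √C * ‖T† u‖ := by
    obtain ⟨hu', hSu⟩ := mem_ker_iff.mp hu
    rw [← Real.sqrt_sq (norm_nonneg _), ← Real.sqrt_sq (norm_nonneg (T† u)), ← Real.sqrt_mul hC]
    exact Real.sqrt_le_sqrt (hest u u.2 hu' hSu)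
  have hest_all := norm_inner_le_of_forall_mem hTdense S.ker
    (fun v ↦ mem_ker_iff.mpr (hranker v)) (mem_ker_iff.mpr ⟨hα, hα0⟩) hest_ker
  obtain ⟨h, hh, hTh, hhC⟩ :=
    exists_apply_eq_of_norm_inner_le hTdense hTclosed (Real.sqrt_nonneg C) hest_all
  exact ⟨h, hh, hTh, (Real.le_sqrt (norm_nonneg h) hC).mp hhC⟩

/-- Functional-analytic core of Theorem 5.6: if `T`, `S` are densely defined closed
operators with `ran T ⊆ ker S`, `α ∈ ker S`, and `|⟨α,u⟩|² ≤ C‖T*u‖²` for all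
`u ∈ dom T* ∩ ker S`, then there is `h ∈ dom T` with `T h = α` and `‖h‖² ≤ C`. -/
theorem exists_solution_of_apriori_estimate
    {H₁ H₂ H₃ : Type*}
    [NormedAddCommGroup H₁] [InnerProductSpace ℂ H₁] [CompleteSpace H₁]
    [NormedAddCommGroup H₂] [InnerProductSpace ℂ H₂] [CompleteSpace H₂]
    [NormedAddCommGroup H₃] [InnerProductSpace ℂ H₃] [CompleteSpace H₃]
    (T : H₁ →ₗ.[ℂ] H₂) (S : H₂ →ₗ.[ℂ] H₃)
    (hTdense : Dense (T.domain : Set H₁)) (hSdense : Dense (S.domain : Set H₂))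
    (hTclosed : T.IsClosed) (hSclosed : S.IsClosed)
    (hranker : ∀ v : T.domain, ∃ hv : (T v : H₂) ∈ S.domain, S ⟨T v, hv⟩ = 0)
    (α : H₂) (hα : α ∈ S.domain) (hα0 : S ⟨α, hα⟩ = 0)
    (C : ℝ) (hC : 0 ≤ C)
    (hest : ∀ u : H₂, ∀ hu : u ∈ T.adjoint.domain, ∀ hu' : u ∈ S.domain,
      S ⟨u, hu'⟩ = 0 → ‖(⟪α, u⟫_ℂ : ℂ)‖ ^ 2 ≤ C * ‖T.adjoint ⟨u, hu⟩‖ ^ 2) :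
    ∃ h : H₁, ∃ hh : h ∈ T.domain, T ⟨h, hh⟩ = α ∧ ‖h‖ ^ 2 ≤ C :=
  exists_solution_of_apriori_estimate_general T S hTdense hTclosed hSclosed hranker α hα hα0 C hC
    hest
end
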